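/- Let p ≥ 2, let b_1, …, b_p ∈ ℝ and a_1, …, a_p > 0, and let μ_0 < … < μ_{p−1}, τ_1 < … < τ_{p−1}, α_1^± < … < α_p^± be the (simple) eigenvalues of J_p, J_{p,1} and J^± respectively. Then: α_1⁻ < α_1⁺ < α_2⁻ < α_2⁺ < … < α_p⁻ < α_p⁺; moreover α_1⁻ < μ_0 and τ_j < α_{j+1}⁻ < μ_j for all j ∈ {1, …, p−1}; and μ_{p−1} < α_p⁺ and μ_{j−1} < α_j⁺ < τ_j for all j ∈ {1, …, p−1}. -/
import Mathlib


open Polynomial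

/-- The `p × p` real symmetric tridiagonal Jacobi matrix `J_p`. -/
def jacobiMatrix (p : ℕ) (a b : ℕ → ℝ) : Matrix (Fin p) (Fin p) ℝ :=
  fun i j =>
    if (i : ℕ) = (j : ℕ) then b ((i : ℕ) + 1)
    else if (i : ℕ) + 1 = (j : ℕ) then a ((i : ℕ) + 1)
    else if (j : ℕ) + 1 = (i : ℕ) then a ((j : ℕ) + 1)
    else 0

/-- `J_p + ε · a_p² · e_p e_pᵀ`; `ε = 1` gives `J⁺`, `ε = -1` gives `J⁻`. -/
def jacobiPM (p : ℕ) (a b : ℕ → ℝ) (ε : ℝ) : Matrix (Fin p) (Fin p) ℝ :=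
  fun i j => jacobiMatrix p a b i j +
    (if (i : ℕ) = p - 1 ∧ (j : ℕ) = p - 1 then ε * (a p) ^ 2 else 0)

section Aux15
open Polynomial Matrix

variable {R : Type*} [CommRing R]

def triMatrix (n : ℕ) (d e : ℕ → R) : Matrix (Fin n) (Fin n) R :=
  fun i j =>
    if (i : ℕ) = (j : ℕ) then d ((i : ℕ) + 1)
    else if (i : ℕ) + 1 = (j : ℕ) then e ((i : ℕ) + 1)
    else if (j : ℕ) + 1 = (i : ℕ) then e ((j : ℕ) + 1)
    else 0

theorem triMatrix_val (n : ℕ) (d e : ℕ → R) (i j : Fin n) :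
    triMatrix n d e i j =
      if (i : ℕ) = (j : ℕ) then d ((i : ℕ) + 1)
      else if (i : ℕ) + 1 = (j : ℕ) then e ((i : ℕ) + 1)
      else if (j : ℕ) + 1 = (i : ℕ) then e ((j : ℕ) + 1)
      else 0 := rfl

theorem triMatrix_val' (n : ℕ) (d e : ℕ → R) (i j : Fin n) (vi vj : ℕ)
    (hi : (i : ℕ) = vi) (hj : (j : ℕ) = vj) :
    triMatrix n d e i j =
      if vi = vj then d (vi + 1)
      else if vi + 1 = vj then e (vi + 1)
      else if vj + 1 = vi then e (vj + 1)
      else 0 := by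
  rw [triMatrix_val, hi, hj]

theorem succAbove_castSucc_last_val (n : ℕ) (k : Fin (n+1)) :
    ((((Fin.last n).castSucc : Fin (n+2)).succAbove k) : ℕ)
      = if (k : ℕ) < n then (k : ℕ) else (k : ℕ) + 1 := by
  rw [Fin.succAbove]
  split
  · rename_i h
    rw [if_pos]
    · rfl
    · simpa [Fin.lt_def] using h
  · rename_i h
    rw [if_neg]
    · rfl
    · simpa [Fin.lt_def] using h

theorem triMatrix_det_rec (n : ℕ) (d e : ℕ → R) :
    (triMatrix (n+2) d e).det
      = d (n+2) * (triMatrix (n+1) d e).det - e (n+1)^2 * (triMatrix n d e).det := by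
  have hlast : ((Fin.last (n+1) : Fin (n+2)) : ℕ) = n+1 := rfl
  rw [det_succ_row (triMatrix (n+2) d e) (Fin.last (n+1))]
  rw [Fin.sum_univ_castSucc, Fin.sum_univ_castSucc]
  have hzero : ∀ j : Fin n,
      (-1 : R) ^ ((Fin.last (n+1) : ℕ) + ((j.castSucc.castSucc : Fin (n+2)) : ℕ)) *
        triMatrix (n+2) d e (Fin.last (n+1)) j.castSucc.castSucc *
        det ((triMatrix (n+2) d e).submatrix (Fin.last (n+1)).succAbove
          (j.castSucc.castSucc).succAbove) = 0 := by
    intro j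
    have h1 : triMatrix (n+2) d e (Fin.last (n+1)) j.castSucc.castSucc = 0 := by
      have hjn : (j : ℕ) < n := j.isLt
      rw [triMatrix_val' (n+2) d e _ _ (n+1) (j : ℕ) rfl rfl]
      rw [if_neg (by omega), if_neg (by omega), if_neg (by omega)]
    rw [h1, mul_zero, zero_mul]
  rw [Finset.sum_eq_zero (fun j _ => hzero j), zero_add]
  -- the two surviving terms
  have hsub2 : (triMatrix (n+2) d e).submatrix (Fin.last (n+1)).succAbove
      (Fin.last (n+1)).succAbove = triMatrix (n+1) d e := by
    ext i j
    rw [Fin.succAbove_last, submatrix_apply]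
    rw [triMatrix_val' (n+2) d e _ _ (i : ℕ) (j : ℕ) (by simp) (by simp),
      triMatrix_val' (n+1) d e _ _ (i : ℕ) (j : ℕ) rfl rfl]
  have hA_ll : triMatrix (n+2) d e (Fin.last (n+1)) (Fin.last (n+1)) = d (n+2) := by
    rw [triMatrix_val' (n+2) d e _ _ (n+1) (n+1) rfl rfl, if_pos rfl]
  have hA_lc : triMatrix (n+2) d e (Fin.last (n+1)) ((Fin.last n).castSucc) = e (n+1) := by
    rw [triMatrix_val' (n+2) d e _ _ (n+1) n rfl rfl,
      if_neg (by omega), if_neg (by omega), if_pos rfl]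
  -- the cross minor
  set B := (triMatrix (n+2) d e).submatrix (Fin.last (n+1)).succAbove
      (((Fin.last n).castSucc : Fin (n+2))).succAbove with hB
  have hrowv : ∀ i : Fin (n+1), (((Fin.last (n+1)).succAbove i : Fin (n+2)) : ℕ) = (i : ℕ) := by
    intro i; rw [Fin.succAbove_last]; simp
  have hBdet : det B = e (n+1) * det (triMatrix n d e) := by
    rw [det_succ_column B (Fin.last n), Fin.sum_univ_castSucc]
    have hcol0 : ∀ i : Fin n, B i.castSucc (Fin.last n) = 0 := by
      intro i
      have hin : (i : ℕ) < n := i.isLt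
      rw [hB, submatrix_apply,
        triMatrix_val' (n+2) d e _ _ (i : ℕ) (n+1)
          (by rw [hrowv]; simp)
          (by rw [succAbove_castSucc_last_val]; simp)]
      rw [if_neg (by omega), if_neg (by omega), if_neg (by omega)]
    rw [Finset.sum_eq_zero (fun i _ => by rw [hcol0 i, mul_zero, zero_mul]), zero_add]
    have hB_ll : B (Fin.last n) (Fin.last n) = e (n+1) := by
      rw [hB, submatrix_apply,
        triMatrix_val' (n+2) d e _ _ n (n+1)
          (by rw [hrowv]; rfl)
          (by rw [succAbove_castSucc_last_val]; simp)]
      rw [if_neg (by omega), if_pos rfl]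
    have hBsub : B.submatrix (Fin.last n).succAbove (Fin.last n).succAbove
        = triMatrix n d e := by
      ext k l
      have hkn : (k : ℕ) < n := k.isLt
      have hln : (l : ℕ) < n := l.isLt
      rw [hB]
      simp only [submatrix_apply]
      have hr : (((Fin.last (n+1)).succAbove ((Fin.last n).succAbove k)) : ℕ) = (k : ℕ) := by
        rw [hrowv, Fin.succAbove_last]; simp
      have hc : ((((Fin.last n).castSucc : Fin (n+2)).succAbove ((Fin.last n).succAbove l)) : ℕ)
          = (l : ℕ) := by
        rw [succAbove_castSucc_last_val, Fin.succAbove_last]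
        simp only [Fin.coe_castSucc]
        rw [if_pos hln]
      rw [triMatrix_val' (n+2) d e _ _ (k : ℕ) (l : ℕ) hr hc,
        triMatrix_val' n d e _ _ (k : ℕ) (l : ℕ) rfl rfl]
    have hsign : (-1 : R) ^ (((Fin.last n : Fin (n+1)) : ℕ) + ((Fin.last n : Fin (n+1)) : ℕ))
        = 1 := Even.neg_one_pow ⟨n, rfl⟩
    rw [hB_ll, hBsub, hsign, one_mul]
  have hsign1 : (-1 : R) ^ (((Fin.last (n+1) : Fin (n+2)) : ℕ)
      + (((Fin.last n).castSucc : Fin (n+2)) : ℕ)) = -1 := by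
    have h2 : ((Fin.last (n+1) : Fin (n+2)) : ℕ) + (((Fin.last n).castSucc : Fin (n+2)) : ℕ)
        = 2*n + 1 := by simp [Fin.coe_castSucc]; omega
    rw [h2]
    exact Odd.neg_one_pow ⟨n, by ring⟩
  have hsign2 : (-1 : R) ^ (((Fin.last (n+1) : Fin (n+2)) : ℕ)
      + ((Fin.last (n+1) : Fin (n+2)) : ℕ)) = 1 := Even.neg_one_pow ⟨n+1, rfl⟩
  rw [hsign1, hA_lc, hBdet, hsign2, hA_ll, hsub2]
  ring


section Jac




theorem triMatrix_submatrix (n : ℕ) {R : Type*} [CommRing R] (d e : ℕ → R) :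
    (triMatrix (n+1) d e).submatrix Fin.castSucc Fin.castSucc = triMatrix n d e := by
  ext i j
  simp only [Matrix.submatrix_apply, triMatrix, Fin.coe_castSucc]

theorem charmatrix_jacobi (p : ℕ) (a b : ℕ → ℝ) :
    charmatrix (jacobiMatrix p a b)
      = triMatrix p (fun k => X - C (b k)) (fun k => -C (a k)) := by
  ext i j
  by_cases h : i = j
  · subst h
    rw [charmatrix_apply_eq, triMatrix, jacobiMatrix]
    simp
  · have h' : (i : ℕ) ≠ (j : ℕ) := fun hc => h (Fin.ext hc)
    rw [charmatrix_apply_ne _ _ _ h, triMatrix, jacobiMatrix]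
    simp only [if_neg h']
    split
    · simp
    · split
      · simp
      · simp

noncomputable def jacP (a b : ℕ → ℝ) (k : ℕ) : Polynomial ℝ := (jacobiMatrix k a b).charpoly

theorem jacP_zero (a b : ℕ → ℝ) : jacP a b 0 = 1 := by
  rw [jacP, Matrix.charpoly, det_fin_zero]

theorem jacP_one (a b : ℕ → ℝ) : jacP a b 1 = X - C (b 1) := by
  rw [jacP, Matrix.charpoly, det_fin_one, charmatrix_apply_eq]
  rfl

theorem jacP_rec (a b : ℕ → ℝ) (n : ℕ) :
    jacP a b (n+2) = (X - C (b (n+2))) * jacP a b (n+1) - C ((a (n+1))^2) * jacP a b n := by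
  have h := triMatrix_det_rec n (fun k => X - C (b k)) (fun k => -C (a k))
  simp only [jacP, Matrix.charpoly, charmatrix_jacobi]
  rw [h]
  congr 1
  rw [neg_pow, neg_one_sq, one_mul, ← map_pow]

theorem charmatrix_submatrix_jacobi (n : ℕ) (a b : ℕ → ℝ) :
    (charmatrix (jacobiMatrix (n+1) a b)).submatrix Fin.castSucc Fin.castSucc
      = charmatrix (jacobiMatrix n a b) := by
  rw [charmatrix_jacobi, charmatrix_jacobi, triMatrix_submatrix]

theorem jacPM_charpoly (n : ℕ) (a b : ℕ → ℝ) (ε : ℝ) :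
    (jacobiPM (n+1) a b ε).charpoly
      = jacP a b (n+1) - C (ε * (a (n+1))^2) * jacP a b n := by
  set J := jacobiMatrix (n+1) a b with hJ
  set v : Fin (n+1) → Polynomial ℝ :=
    fun j => if j = Fin.last n then -C (ε * (a (n+1))^2) else 0 with hv
  have hM : charmatrix (jacobiPM (n+1) a b ε)
      = Matrix.updateRow (charmatrix J) (Fin.last n) (charmatrix J (Fin.last n) + v) := by
    apply Matrix.ext
    intro i j
    by_cases hi : i = Fin.last n
    · subst hi
      rw [Matrix.updateRow_self, Pi.add_apply]
      by_cases hj : j = Fin.last n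
      · subst hj
        rw [charmatrix_apply_eq, charmatrix_apply_eq, hv]
        have hentry : jacobiPM (n+1) a b ε (Fin.last n) (Fin.last n)
            = J (Fin.last n) (Fin.last n) + ε * (a (n+1))^2 := by
          rw [jacobiPM]
          have : ((Fin.last n : Fin (n+1)) : ℕ) = (n+1) - 1 := by simp
          rw [if_pos ⟨this, this⟩, hJ]
        rw [hentry]
        simp only [map_add]
        simp
        ring
      · have hne : (Fin.last n) ≠ j := fun hc => hj hc.symm
        rw [charmatrix_apply_ne _ _ _ hne, charmatrix_apply_ne _ _ _ hne, hv]
        have hentry : jacobiPM (n+1) a b ε (Fin.last n) j = J (Fin.last n) j := by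
          rw [jacobiPM]
          have : ¬(((Fin.last n : Fin (n+1)) : ℕ) = (n+1) - 1 ∧ ((j : Fin (n+1)) : ℕ) = (n+1) - 1) := by
            rintro ⟨-, hj2⟩
            exact hj (Fin.ext (by simpa using hj2))
          rw [if_neg this, hJ, add_zero]
        rw [hentry]
        simp [hj]
    · rw [Matrix.updateRow_ne hi]
      have hentry : jacobiPM (n+1) a b ε i j = J i j := by
        rw [jacobiPM]
        have : ¬(((i : Fin (n+1)) : ℕ) = (n+1) - 1 ∧ ((j : Fin (n+1)) : ℕ) = (n+1) - 1) := by
          rintro ⟨hi2, -⟩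
          exact hi (Fin.ext (by simpa using hi2))
        rw [if_neg this, hJ, add_zero]
      by_cases h : i = j
      · subst h
        rw [charmatrix_apply_eq, charmatrix_apply_eq, hentry]
      · rw [charmatrix_apply_ne _ _ _ h, charmatrix_apply_ne _ _ _ h, hentry]
  have hdet1 : Matrix.det (Matrix.updateRow (charmatrix J) (Fin.last n)
      (fun j => if j = Fin.last n then (1 : Polynomial ℝ) else 0)) = jacP a b n := by
    rw [det_succ_row _ (Fin.last n), Fin.sum_univ_castSucc]
    have hz : ∀ j : Fin n,
        (-1 : Polynomial ℝ) ^ (((Fin.last n : Fin (n+1)) : ℕ) + ((j.castSucc : Fin (n+1)) : ℕ)) *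
          (Matrix.updateRow (charmatrix J) (Fin.last n)
            (fun j => if j = Fin.last n then (1 : Polynomial ℝ) else 0)) (Fin.last n) j.castSucc *
          Matrix.det ((Matrix.updateRow (charmatrix J) (Fin.last n)
            (fun j => if j = Fin.last n then (1 : Polynomial ℝ) else 0)).submatrix
              (Fin.last n).succAbove j.castSucc.succAbove) = 0 := by
      intro j
      rw [Matrix.updateRow_self]
      rw [if_neg (Fin.castSucc_lt_last j).ne, mul_zero, zero_mul]
    rw [Finset.sum_eq_zero (fun j _ => hz j), zero_add, Matrix.updateRow_self, if_pos rfl]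
    have hsub : (Matrix.updateRow (charmatrix J) (Fin.last n)
        (fun j => if j = Fin.last n then (1 : Polynomial ℝ) else 0)).submatrix
          (Fin.last n).succAbove (Fin.last n).succAbove
        = charmatrix (jacobiMatrix n a b) := by
      rw [Fin.succAbove_last]
      rw [← charmatrix_submatrix_jacobi n a b]
      ext k l
      simp only [Matrix.submatrix_apply]
      rw [Matrix.updateRow_ne (Fin.castSucc_lt_last k).ne]
    have hsign : (-1 : Polynomial ℝ) ^ (((Fin.last n : Fin (n+1)) : ℕ)
        + ((Fin.last n : Fin (n+1)) : ℕ)) = 1 := Even.neg_one_pow ⟨n, rfl⟩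
    rw [hsub, hsign, jacP, Matrix.charpoly]
    ring
  have hv' : v = (-C (ε * (a (n+1))^2)) • (fun j => if j = Fin.last n then (1 : Polynomial ℝ) else 0) := by
    rw [hv]
    funext j
    by_cases h : j = Fin.last n
    · simp [h]
    · simp [h]
  rw [Matrix.charpoly, hM, Matrix.det_updateRow_add, Matrix.updateRow_eq_self, hv',
    Matrix.det_updateRow_smul, hdet1, neg_mul, ← sub_eq_add_neg]
  rfl


section Generic


theorem monic_eq_prod_of_roots (q : Polynomial ℝ) (n : ℕ) (hq : q.Monic)
    (hdeg : q.natDegree = n) (r : ℕ → ℝ)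
    (hmono : ∀ i j, i < j → j < n → r i < r j)
    (hroots : ∀ i, i < n → q.eval (r i) = 0) :
    q = ∏ i ∈ Finset.range n, (X - C (r i)) := by
  set Q := ∏ i ∈ Finset.range n, (X - C (r i)) with hQ
  have hQm : Q.Monic := monic_prod_of_monic _ _ (fun i _ => monic_X_sub_C (r i))
  have hQdeg : Q.natDegree = n := by
    rw [hQ, natDegree_prod _ _ (fun i _ => X_sub_C_ne_zero (r i))]
    simp [natDegree_X_sub_C]
  by_contra hne
  have hd : q - Q ≠ 0 := sub_ne_zero_of_ne hne
  have hdeq : q.degree = Q.degree := by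
    rw [degree_eq_natDegree hq.ne_zero, degree_eq_natDegree hQm.ne_zero, hdeg, hQdeg]
  have hdeglt : (q - Q).degree < (n : ℕ) := by
    have h := degree_sub_lt hdeq hq.ne_zero (by rw [hq.leadingCoeff, hQm.leadingCoeff])
    rw [degree_eq_natDegree hq.ne_zero, hdeg] at h
    exact h
  have hndlt : (q - Q).natDegree < n := (natDegree_lt_iff_degree_lt hd).2 hdeglt
  have hinj : Set.InjOn r (Finset.range n) := by
    intro i hi j hj hij
    rcases lt_trichotomy i j with h | h | h
    · exact absurd hij (hmono i j h (Finset.mem_range.1 hj)).ne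
    · exact h
    · exact absurd hij.symm (hmono j i h (Finset.mem_range.1 hi)).ne
  have hcard : ((Finset.range n).image r).card = n := by
    rw [Finset.card_image_of_injOn hinj, Finset.card_range]
  have hzero : q - Q = 0 := by
    apply eq_zero_of_natDegree_lt_card_of_eval_eq_zero' _ ((Finset.range n).image r)
    · intro x hx
      rcases Finset.mem_image.1 hx with ⟨i, hi, rfl⟩
      have hQr : Q.eval (r i) = 0 := by
        rw [hQ, eval_prod]
        exact Finset.prod_eq_zero hi (by simp)
      rw [eval_sub, hroots i (Finset.mem_range.1 hi), hQr, sub_zero]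
    · rw [hcard]; exact hndlt
  exact hd hzero

theorem sign_prod_of_count (n k : ℕ) (r : ℕ → ℝ) (x : ℝ) (hk : k ≤ n)
    (h1 : ∀ i, i < k → r i < x) (h2 : ∀ i, k ≤ i → i < n → x < r i) :
    0 < (-1 : ℝ)^(n - k) * ∏ i ∈ Finset.range n, (x - r i) := by
  have hsplit : ∏ i ∈ Finset.range n, (x - r i)
      = (∏ i ∈ Finset.Ico 0 k, (x - r i)) * ∏ i ∈ Finset.Ico k n, (x - r i) := by
    rw [Finset.prod_Ico_consecutive _ (Nat.zero_le k) hk, Finset.range_eq_Ico]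
  have hP1 : 0 < ∏ i ∈ Finset.Ico 0 k, (x - r i) :=
    Finset.prod_pos (fun i hi => sub_pos.2 (h1 i (Finset.mem_Ico.1 hi).2))
  have hP2 : 0 < ∏ i ∈ Finset.Ico k n, (r i - x) :=
    Finset.prod_pos (fun i hi => sub_pos.2 (h2 i (Finset.mem_Ico.1 hi).1 (Finset.mem_Ico.1 hi).2))
  have hneg : ∏ i ∈ Finset.Ico k n, (x - r i)
      = (-1 : ℝ)^(n - k) * ∏ i ∈ Finset.Ico k n, (r i - x) := by
    rw [← Nat.card_Ico k n, ← Finset.prod_const, ← Finset.prod_mul_distrib]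
    apply Finset.prod_congr rfl
    intro i _
    ring
  rw [hsplit, hneg]
  have h4 : (-1 : ℝ)^(n-k) * ((∏ i ∈ Finset.Ico 0 k, (x - r i)) *
      ((-1 : ℝ)^(n - k) * ∏ i ∈ Finset.Ico k n, (r i - x)))
      = ((-1 : ℝ)^(n-k))^2 * ((∏ i ∈ Finset.Ico 0 k, (x - r i)) *
        (∏ i ∈ Finset.Ico k n, (r i - x))) := by ring
  rw [h4, ← pow_mul, mul_comm (n-k) 2, pow_mul, neg_one_sq, one_pow, one_mul]
  exact mul_pos hP1 hP2

theorem count_below_le (n : ℕ) (r : ℕ → ℝ) (x : ℝ) :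
    ((Finset.range n).filter (fun i => r i < x)).card ≤ n := by
  calc ((Finset.range n).filter (fun i => r i < x)).card
      ≤ (Finset.range n).card := Finset.card_filter_le _ _
    _ = n := Finset.card_range n

theorem count_below_spec₁ (n : ℕ) (r : ℕ → ℝ) (x : ℝ)
    (hmono : ∀ i j, i < j → j < n → r i < r j)
    (i : ℕ) (hi : i < ((Finset.range n).filter (fun i => r i < x)).card) :
    r i < x := by
  by_contra hge
  have hsub : (Finset.range n).filter (fun j => r j < x) ⊆ Finset.range i := by
    intro j hj
    rcases Finset.mem_filter.1 hj with ⟨hjn, hjx⟩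
    rw [Finset.mem_range] at hjn ⊢
    by_contra hji
    push_neg at hji
    have : r i ≤ r j := by
      rcases eq_or_lt_of_le hji with h | h
      · rw [h]
      · exact le_of_lt (hmono i j h hjn)
    exact hge (lt_of_le_of_lt this hjx)
  have := Finset.card_le_card hsub
  rw [Finset.card_range] at this
  omega

theorem count_below_spec₂ (n : ℕ) (r : ℕ → ℝ) (x : ℝ)
    (hmono : ∀ i j, i < j → j < n → r i < r j)
    (i : ℕ) (hi : ((Finset.range n).filter (fun i => r i < x)).card ≤ i) (hin : i < n)
    (hne : r i ≠ x) : x < r i := by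
  rcases lt_trichotomy (r i) x with h | h | h
  · exfalso
    have hsub : Finset.range (i+1) ⊆ (Finset.range n).filter (fun j => r j < x) := by
      intro j hj
      rw [Finset.mem_range] at hj
      refine Finset.mem_filter.2 ⟨Finset.mem_range.2 (by omega), ?_⟩
      have : r j ≤ r i := by
        rcases eq_or_lt_of_le (Nat.lt_succ_iff.1 hj) with h' | h'
        · rw [h']
        · exact le_of_lt (hmono j i h' hin)
      exact lt_of_le_of_lt this h
    have := Finset.card_le_card hsub
    rw [Finset.card_range] at this
    omega
  · exact absurd h hne
  · exact h

theorem parity_of_signs {m1 m2 : ℕ} {y : ℝ} (h1 : 0 < (-1 : ℝ)^m1 * y)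
    (h2 : 0 < (-1 : ℝ)^m2 * y) : m1 % 2 = m2 % 2 := by
  rcases Nat.even_or_odd m1 with hm1 | hm1 <;> rcases Nat.even_or_odd m2 with hm2 | hm2
  · rw [Nat.even_iff] at hm1 hm2; omega
  · rw [hm1.neg_one_pow] at h1; rw [hm2.neg_one_pow] at h2; nlinarith
  · rw [hm1.neg_one_pow] at h1; rw [hm2.neg_one_pow] at h2; nlinarith
  · rw [Nat.odd_iff] at hm1 hm2; omega

theorem squeeze_counts (K : ℕ) (s q : ℕ → ℕ)
    (hmono : ∀ k, k < K → s k ≤ s (k+1))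
    (hstep : ∀ k, k < K → q (k+1) = q k ∨ q (k+1) = q k + 1)
    (hpar : ∀ k, k ≤ K → s k % 2 = q k % 2)
    (h0 : q 0 ≤ 1) (hK : s K ≤ q K + 1) :
    ∀ k, k ≤ K → s k = q k := by
  have hup : ∀ k, k ≤ K → q k ≤ s k := by
    intro k
    induction k with
    | zero => intro _; have := hpar 0 (Nat.zero_le K); omega
    | succ m ih =>
      intro hm
      have hmK : m < K := by omega
      have h1 := ih (by omega)
      have h2 := hmono m hmK
      have h3 := hstep m hmK
      have h4 := hpar m (by omega)
      have h5 := hpar (m+1) hm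
      omega
  have hdown : ∀ j, j ≤ K → s (K - j) ≤ q (K - j) := by
    intro j
    induction j with
    | zero => intro _; simp only [Nat.sub_zero]; have := hpar K le_rfl; omega
    | succ m ih =>
      intro hm
      have h1 := ih (by omega)
      have hk : K - (m+1) < K := by omega
      have hkk : K - (m+1) + 1 = K - m := by omega
      have h2 := hmono (K - (m+1)) hk
      have h3 := hstep (K - (m+1)) hk
      have h4 := hpar (K - (m+1)) (by omega)
      have h5 := hpar (K - (m+1) + 1) (by omega)
      rw [hkk] at h2 h3 h5
      omega
  intro k hk
  have := hdown (K - k) (by omega)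
  have hkk : K - (K - k) = k := by omega
  rw [hkk] at this
  have := hup k hk
  omega

end Generic

theorem jacW_pos (a b : ℕ → ℝ) (ha : ∀ x, 0 < a x) : ∀ n : ℕ, ∀ x : ℝ,
    0 < (derivative (jacP a b (n+1))).eval x * (jacP a b n).eval x
      - (jacP a b (n+1)).eval x * (derivative (jacP a b n)).eval x := by
  intro n
  induction n with
  | zero =>
    intro x
    simp [jacP_zero, jacP_one]
  | succ m ih =>
    intro x
    have hrec := jacP_rec a b m
    have hder : derivative (jacP a b (m+2))
        = jacP a b (m+1) + (X - C (b (m+2))) * derivative (jacP a b (m+1))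
          - C ((a (m+1))^2) * derivative (jacP a b m) := by
      rw [hrec, derivative_sub, derivative_mul, derivative_mul, derivative_C,
        derivative_sub, derivative_X, derivative_C]
      ring
    have hx := ih x
    have ha2 : 0 < (a (m+1))^2 := pow_pos (ha (m+1)) 2
    have he1 : (jacP a b (m+2)).eval x
        = (x - b (m+2)) * (jacP a b (m+1)).eval x - (a (m+1))^2 * (jacP a b m).eval x := by
      rw [hrec]; simp
    have he2 : (derivative (jacP a b (m+2))).eval x
        = (jacP a b (m+1)).eval x + (x - b (m+2)) * (derivative (jacP a b (m+1))).eval x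
          - (a (m+1))^2 * (derivative (jacP a b m)).eval x := by
      rw [hder]; simp
    rw [he1, he2]
    nlinarith [sq_nonneg ((jacP a b (m+1)).eval x)]

theorem erase_range_split (n k : ℕ) (hk : k < n) :
    (Finset.range n).erase k = Finset.Ico 0 k ∪ Finset.Ico (k+1) n := by
  ext j
  simp only [Finset.mem_erase, Finset.mem_range, Finset.mem_union, Finset.mem_Ico]
  omega

theorem deriv_prod_eval (n : ℕ) (r : ℕ → ℝ) (k : ℕ) (hk : k < n) :
    (derivative (∏ i ∈ Finset.range n, (X - C (r i)))).eval (r k)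
      = ∏ i ∈ (Finset.range n).erase k, (r k - r i) := by
  have hsplit : ∏ i ∈ Finset.range n, (X - C (r i))
      = (X - C (r k)) * ∏ i ∈ (Finset.range n).erase k, (X - C (r i)) :=
    (Finset.mul_prod_erase _ _ (Finset.mem_range.2 hk)).symm
  rw [hsplit, derivative_mul, derivative_sub, derivative_X, derivative_C, sub_zero, one_mul]
  rw [eval_add, eval_mul, eval_sub, eval_X, eval_C, sub_self, zero_mul, add_zero, eval_prod]
  simp

theorem sign_deriv_prod (n k : ℕ) (r : ℕ → ℝ) (hk : k < n)
    (hmono : ∀ i j, i < j → j < n → r i < r j) :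
    0 < (-1 : ℝ)^(n - 1 - k) * ∏ i ∈ (Finset.range n).erase k, (r k - r i) := by
  rw [erase_range_split n k hk]
  rw [Finset.prod_union (by
    rw [Finset.disjoint_left]
    intro j hj1 hj2
    rw [Finset.mem_Ico] at hj1 hj2
    omega)]
  have hP1 : 0 < ∏ i ∈ Finset.Ico 0 k, (r k - r i) :=
    Finset.prod_pos (fun i hi => sub_pos.2 (hmono i k (Finset.mem_Ico.1 hi).2 hk))
  have hP2 : 0 < ∏ i ∈ Finset.Ico (k+1) n, (r i - r k) :=
    Finset.prod_pos (fun i hi => sub_pos.2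
      (hmono k i (Finset.mem_Ico.1 hi).1 (Finset.mem_Ico.1 hi).2))
  have hneg : ∏ i ∈ Finset.Ico (k+1) n, (r k - r i)
      = (-1 : ℝ)^(n - 1 - k) * ∏ i ∈ Finset.Ico (k+1) n, (r i - r k) := by
    have hcard : (Finset.Ico (k+1) n).card = n - 1 - k := by
      rw [Nat.card_Ico]; omega
    rw [← hcard, ← Finset.prod_const, ← Finset.prod_mul_distrib]
    apply Finset.prod_congr rfl
    intro i _
    ring
  rw [hneg]
  have h4 : (-1 : ℝ)^(n-1-k) * ((∏ i ∈ Finset.Ico 0 k, (r k - r i)) *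
      ((-1 : ℝ)^(n-1-k) * ∏ i ∈ Finset.Ico (k+1) n, (r i - r k)))
      = ((-1 : ℝ)^(n-1-k))^2 * ((∏ i ∈ Finset.Ico 0 k, (r k - r i)) *
        (∏ i ∈ Finset.Ico (k+1) n, (r i - r k))) := by ring
  rw [h4, ← pow_mul, mul_comm (n-1-k) 2, pow_mul, neg_one_sq, one_pow, one_mul]
  exact mul_pos hP1 hP2

end Jac

theorem sign_transfer {c u v : ℝ} (h1 : 0 < c * u) (h2 : 0 < u * v) : 0 < c * v := by
  nlinarith [mul_pos h1 h2, sq_nonneg u]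

open Polynomial in
theorem locate (N K : ℕ) (H : Polynomial ℝ) (r z : ℕ → ℝ) (q : ℕ → ℕ)
    (hH : H = ∏ i ∈ Finset.range N, (X - C (r i)))
    (hrmono : ∀ i j, i < j → j < N → r i < r j)
    (hzmono : ∀ k, k < K → z k < z (k+1))
    (hqstep : ∀ k, k < K → q (k+1) = q k ∨ q (k+1) = q k + 1)
    (hq0 : q 0 ≤ 1) (hqle : ∀ k, k ≤ K → q k ≤ N) (hqK : N ≤ q K + 1)
    (hsign : ∀ k, k ≤ K → 0 < (-1 : ℝ)^(N - q k) * H.eval (z k)) :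
    ∀ k, k ≤ K → (∀ i, i < q k → r i < z k) ∧ (∀ i, q k ≤ i → i < N → z k < r i) := by
  have hev : ∀ x, H.eval x = ∏ i ∈ Finset.range N, (x - r i) := by
    intro x; rw [hH]; simp [eval_prod]
  have hne : ∀ k, k ≤ K → ∀ i, i < N → r i ≠ z k := by
    intro k hk i hiN heq
    have h0 := hsign k hk
    rw [hev, Finset.prod_eq_zero (Finset.mem_range.2 hiN) (by rw [heq, sub_self])] at h0
    simp at h0
  set s : ℕ → ℕ := fun k => ((Finset.range N).filter (fun i => r i < z k)).card with hs
  have hsK : ∀ k, s k ≤ N := fun k => count_below_le N r (z k)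
  have hcount : ∀ k, k ≤ K → 0 < (-1:ℝ)^(N - s k) * H.eval (z k) := by
    intro k hk
    rw [hev]
    apply sign_prod_of_count N (s k) r (z k) (hsK k)
    · intro i hi; exact count_below_spec₁ N r (z k) hrmono i hi
    · intro i hi hiN; exact count_below_spec₂ N r (z k) hrmono i hi hiN (hne k hk i hiN)
  have hpar : ∀ k, k ≤ K → s k % 2 = q k % 2 := by
    intro k hk
    have hps := parity_of_signs (hcount k hk) (hsign k hk)
    have h1 := hsK k; have h2 := hqle k hk
    omega
  have hsmono : ∀ k, k < K → s k ≤ s (k+1) := by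
    intro k hk
    apply Finset.card_le_card
    intro i hi
    rcases Finset.mem_filter.1 hi with ⟨h1, h2⟩
    exact Finset.mem_filter.2 ⟨h1, h2.trans (hzmono k hk)⟩
  have hK' : s K ≤ q K + 1 := le_trans (hsK K) hqK
  have heq := squeeze_counts K s q hsmono hqstep hpar hq0 hK'
  intro k hk
  constructor
  · intro i hi
    rw [← heq k hk] at hi
    exact count_below_spec₁ N r (z k) hrmono i hi
  · intro i h1 h2
    rw [← heq k hk] at h1
    exact count_below_spec₂ N r (z k) hrmono i h1 h2 (hne k hk i h2)


end Aux15

theorem statement15 (p : ℕ) (hp : 2 ≤ p) (a b : ℕ → ℝ)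
    (ha : ∀ x, 0 < a x)
    -- `μ i` for `0 ≤ i ≤ p-1`: the eigenvalues `μ_0 < … < μ_{p-1}` of `J_p`
    (μ : ℕ → ℝ)
    (hμ : ∀ i, i < p → (jacobiMatrix p a b).charpoly.eval (μ i) = 0)
    (hμMono : ∀ i j, i < j → j < p → μ i < μ j)
    -- `τ j` for `1 ≤ j ≤ p-1`: the eigenvalues `τ_1 < … < τ_{p-1}` of `J_{p,1}`
    (τ : ℕ → ℝ)
    (hτ : ∀ j, 1 ≤ j → j ≤ p - 1 → (jacobiMatrix (p - 1) a b).charpoly.eval (τ j) = 0)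
    (hτMono : ∀ i j, 1 ≤ i → i < j → j ≤ p - 1 → τ i < τ j)
    -- `αm j = α_j⁻`, `αp j = α_j⁺` for `1 ≤ j ≤ p`: the eigenvalues of `J∓`
    (αm αp : ℕ → ℝ)
    (hαm : ∀ j, 1 ≤ j → j ≤ p → (jacobiPM p a b (-1)).charpoly.eval (αm j) = 0)
    (hαmMono : ∀ i j, 1 ≤ i → i < j → j ≤ p → αm i < αm j)
    (hαp : ∀ j, 1 ≤ j → j ≤ p → (jacobiPM p a b 1).charpoly.eval (αp j) = 0)
    (hαpMono : ∀ i j, 1 ≤ i → i < j → j ≤ p → αp i < αp j) :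
    -- interlacing `α₁⁻ < α₁⁺ < α₂⁻ < α₂⁺ < … < α_p⁻ < α_p⁺`
    (∀ j, 1 ≤ j → j ≤ p → αm j < αp j) ∧
    (∀ j, 1 ≤ j → j ≤ p - 1 → αp j < αm (j + 1)) ∧
    -- relations with `μ` and `τ`
    αm 1 < μ 0 ∧
    (∀ j, 1 ≤ j → j ≤ p - 1 → τ j < αm (j + 1) ∧ αm (j + 1) < μ j) ∧
    μ (p - 1) < αp p ∧
    (∀ j, 1 ≤ j → j ≤ p - 1 → μ (j - 1) < αp j ∧ αp j < τ j) := by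
  obtain ⟨m, rfl⟩ : ∃ m, p = m + 2 := ⟨p - 2, by omega⟩
  have hp1 : m + 2 - 1 = m + 1 := rfl
  rw [hp1] at hτ hτMono ⊢
  -- local root sequences, 0-indexed
  set t : ℕ → ℝ := fun i => τ (i + 1) with ht
  set A : ℕ → ℝ := fun i => αm (i + 1) with hA
  set B : ℕ → ℝ := fun i => αp (i + 1) with hB
  set f : Polynomial ℝ := jacP a b (m+2) with hf
  set g : Polynomial ℝ := jacP a b (m+1) with hg
  have haP : 0 < (a (m+2))^2 := pow_pos (ha (m+2)) 2
  -- product representations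
  have hfProd : f = ∏ i ∈ Finset.range (m+2), (X - C (μ i)) := by
    apply monic_eq_prod_of_roots _ _ (Matrix.charpoly_monic _)
    · rw [Matrix.charpoly_natDegree_eq_dim, Fintype.card_fin]
    · exact fun i j hij hj => hμMono i j hij hj
    · exact fun i hi => hμ i hi
  have hgProd : g = ∏ i ∈ Finset.range (m+1), (X - C (t i)) := by
    apply monic_eq_prod_of_roots _ _ (Matrix.charpoly_monic _)
    · rw [Matrix.charpoly_natDegree_eq_dim, Fintype.card_fin]
    · exact fun i j hij hj => hτMono (i+1) (j+1) (by omega) (by omega) (by omega)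
    · exact fun i hi => hτ (i+1) (by omega) (by omega)
  have hHmProd : (jacobiPM (m+2) a b (-1)).charpoly
      = ∏ i ∈ Finset.range (m+2), (X - C (A i)) := by
    apply monic_eq_prod_of_roots _ _ (Matrix.charpoly_monic _)
    · rw [Matrix.charpoly_natDegree_eq_dim, Fintype.card_fin]
    · exact fun i j hij hj => hαmMono (i+1) (j+1) (by omega) (by omega) (by omega)
    · exact fun i hi => hαm (i+1) (by omega) (by omega)
  have hHpProd : (jacobiPM (m+2) a b 1).charpoly
      = ∏ i ∈ Finset.range (m+2), (X - C (B i)) := by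
    apply monic_eq_prod_of_roots _ _ (Matrix.charpoly_monic _)
    · rw [Matrix.charpoly_natDegree_eq_dim, Fintype.card_fin]
    · exact fun i j hij hj => hαpMono (i+1) (j+1) (by omega) (by omega) (by omega)
    · exact fun i hi => hαp (i+1) (by omega) (by omega)
  -- rank one identities, in eval form
  have hmEval : ∀ x, (jacobiPM (m+2) a b (-1)).charpoly.eval x
      = f.eval x + (a (m+2))^2 * g.eval x := by
    intro x
    have h := jacPM_charpoly (m+1) a b (-1)
    rw [h]
    simp [hf, hg]
  have hpEval : ∀ x, (jacobiPM (m+2) a b 1).charpoly.eval x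
      = f.eval x - (a (m+2))^2 * g.eval x := by
    intro x
    have h := jacPM_charpoly (m+1) a b 1
    rw [h]
    simp [hf, hg]
  -- Wronskian positivity
  have hW : ∀ x : ℝ, 0 < (derivative f).eval x * g.eval x
      - f.eval x * (derivative g).eval x := jacW_pos a b ha (m+1)
  have hfroot : ∀ i, i < m+2 → f.eval (μ i) = 0 := fun i hi => hμ i hi
  -- sign of g at the μ's
  have hgsign : ∀ k, k ≤ m+1 → 0 < (-1:ℝ)^(m+1-k) * g.eval (μ k) := by
    intro k hk
    have hf0 : f.eval (μ k) = 0 := hμ k (by omega)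
    have hW' := hW (μ k)
    rw [hf0, zero_mul, sub_zero] at hW'
    have hd : (derivative f).eval (μ k) = ∏ i ∈ (Finset.range (m+2)).erase k, (μ k - μ i) := by
      rw [hfProd]
      exact deriv_prod_eval (m+2) μ k (by omega)
    have hds := sign_deriv_prod (m+2) k μ (by omega) hμMono
    have hexp : m + 2 - 1 - k = m + 1 - k := by omega
    rw [hexp, ← hd] at hds
    exact sign_transfer hds hW'
  have hgne : ∀ k, k ≤ m+1 → g.eval (μ k) ≠ 0 := by
    intro k hk h0
    have := hgsign k hk
    rw [h0, mul_zero] at this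
    exact lt_irrefl 0 this
  -- locate the t's relative to the μ's (interlacing)
  have hloc1 : ∀ k, k ≤ m+1 →
      (∀ i, i < k → t i < μ k) ∧ (∀ i, k ≤ i → i < m+1 → μ k < t i) :=
    locate (m+1) (m+1) g t μ (fun k => k) hgProd
      (fun i j hij hj => hτMono (i+1) (j+1) (by omega) (by omega) (by omega))
      (fun k hk => hμMono k (k+1) (by omega) (by omega))
      (fun k _ => Or.inr rfl) (Nat.zero_le 1) (fun k hk => hk) (Nat.le_succ (m+1))
      (fun k hk => hgsign k hk)
  -- sign of f at the t's
  have hft : ∀ j, j ≤ m → 0 < (-1:ℝ)^(m+1-j) * f.eval (t j) := by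
    intro j hj
    have h1 : ∀ i, i < j+1 → μ i < t j := by
      intro i hi
      have hμj : μ j < t j := (hloc1 j (by omega)).2 j le_rfl (by omega)
      rcases Nat.lt_succ_iff_lt_or_eq.1 hi with h | h
      · exact lt_trans (hμMono i j h (by omega)) hμj
      · rw [h]; exact hμj
    have h2 : ∀ i, j+1 ≤ i → i < m+2 → t j < μ i := by
      intro i hi him
      have htj : t j < μ (j+1) := (hloc1 (j+1) (by omega)).1 j (by omega)
      rcases Nat.eq_or_lt_of_le hi with h | h
      · rw [← h]; exact htj
      · exact lt_trans htj (hμMono (j+1) i h him)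
    have hs := sign_prod_of_count (m+2) (j+1) μ (t j) (by omega) h1 h2
    have hexp : m + 2 - (j+1) = m + 1 - j := by omega
    rw [hexp] at hs
    have hfev : f.eval (t j) = ∏ i ∈ Finset.range (m+2), (t j - μ i) := by
      rw [hfProd]; simp [eval_prod]
    rw [← hfev] at hs
    exact hs
  have hgt0 : ∀ j, j ≤ m → g.eval (t j) = 0 := fun j hj => hτ (j+1) (by omega) (by omega)
  -- the interlaced chain
  set z : ℕ → ℝ := fun k => if k % 2 = 0 then μ (k/2) else t (k/2) with hz
  have hzeven : ∀ j, z (2*j) = μ j := by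
    intro j
    have h1 : (2*j) % 2 = 0 := by omega
    have h2 : (2*j) / 2 = j := by omega
    simp [hz, h1, h2]
  have hzodd : ∀ j, z (2*j+1) = t j := by
    intro j
    have h1 : (2*j+1) % 2 = 1 := by omega
    have h2 : (2*j+1) / 2 = j := by omega
    simp [hz, h1, h2]
  have hzmono : ∀ k, k < 2*m+2 → z k < z (k+1) := by
    intro k hk
    rcases Nat.even_or_odd k with ⟨j, hj⟩ | ⟨j, hj⟩
    · have hkk : k = 2*j := by omega
      rw [hkk, hzeven j, hzodd j]
      exact (hloc1 j (by omega)).2 j le_rfl (by omega)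
    · have hkk : k = 2*j+1 := by omega
      have hk1 : 2*j+1+1 = 2*(j+1) := by omega
      rw [hkk, hk1, hzodd j, hzeven (j+1)]
      exact (hloc1 (j+1) (by omega)).1 j (by omega)
  -- locate the A's
  have hsignA : ∀ k, k ≤ 2*m+2 →
      0 < (-1:ℝ)^((m+2) - (k/2+1)) * ((jacobiPM (m+2) a b (-1)).charpoly).eval (z k) := by
    intro k hk
    rcases Nat.even_or_odd k with ⟨j, hj⟩ | ⟨j, hj⟩
    · have hkk : k = 2*j := by omega
      have hjm : j ≤ m+1 := by omega
      rw [hkk]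
      have hj2 : 2*j/2 = j := by omega
      rw [hzeven j, hj2, hmEval, hfroot j (by omega), zero_add]
      have hexp : m + 2 - (j+1) = m+1-j := by omega
      rw [hexp]
      have := hgsign j hjm
      nlinarith
    · have hkk : k = 2*j+1 := by omega
      have hjm : j ≤ m := by omega
      rw [hkk]
      have hj2 : (2*j+1)/2 = j := by omega
      rw [hzodd j, hj2, hmEval, hgt0 j hjm, mul_zero, add_zero]
      have hexp : m + 2 - (j+1) = m+1-j := by omega
      rw [hexp]
      exact hft j hjm
  have hq2step : ∀ k, k < 2*m+2 → (k+1)/2+1 = k/2+1 ∨ (k+1)/2+1 = k/2+1+1 := fun k _ => by omega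
  have hq2zero : 0/2+1 ≤ 1 := by omega
  have hq2le : ∀ k, k ≤ 2*m+2 → k/2+1 ≤ m+2 := fun k hk => by omega
  have hq2K : m+2 ≤ (2*m+2)/2+1+1 := by omega
  have hloc2 : ∀ k, k ≤ 2*m+2 →
      (∀ i, i < k/2+1 → A i < z k) ∧ (∀ i, k/2+1 ≤ i → i < m+2 → z k < A i) :=
    locate (m+2) (2*m+2) ((jacobiPM (m+2) a b (-1)).charpoly) A z
      (fun k => k/2+1) hHmProd
      (fun i j hij hj => hαmMono (i+1) (j+1) (by omega) (by omega) (by omega))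
      hzmono hq2step hq2zero hq2le hq2K hsignA
  -- locate the B's
  have hsignB : ∀ k, k ≤ 2*m+2 →
      0 < (-1:ℝ)^((m+2) - ((k+1)/2)) * ((jacobiPM (m+2) a b 1).charpoly).eval (z k) := by
    intro k hk
    rcases Nat.even_or_odd k with ⟨j, hj⟩ | ⟨j, hj⟩
    · have hkk : k = 2*j := by omega
      have hjm : j ≤ m+1 := by omega
      rw [hkk]
      have hj2 : (2*j+1)/2 = j := by omega
      rw [hzeven j, hj2, hpEval, hfroot j (by omega), zero_sub]
      have hexp : m + 2 - j = (m+1-j) + 1 := by omega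
      rw [hexp, pow_succ]
      have := hgsign j hjm
      nlinarith
    · have hkk : k = 2*j+1 := by omega
      have hjm : j ≤ m := by omega
      rw [hkk]
      have hj2 : (2*j+1+1)/2 = j+1 := by omega
      rw [hzodd j, hj2, hpEval, hgt0 j hjm, mul_zero, sub_zero]
      have hexp : m + 2 - (j+1) = m+1-j := by omega
      rw [hexp]
      exact hft j hjm
  have hq3step : ∀ k, k < 2*m+2 → (k+1+1)/2 = (k+1)/2 ∨ (k+1+1)/2 = (k+1)/2+1 := fun k _ => by omega
  have hq3zero : (0+1)/2 ≤ 1 := by omega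
  have hq3le : ∀ k, k ≤ 2*m+2 → (k+1)/2 ≤ m+2 := fun k hk => by omega
  have hq3K : m+2 ≤ (2*m+2+1)/2+1 := by omega
  have hloc3 : ∀ k, k ≤ 2*m+2 →
      (∀ i, i < (k+1)/2 → B i < z k) ∧ (∀ i, (k+1)/2 ≤ i → i < m+2 → z k < B i) :=
    locate (m+2) (2*m+2) ((jacobiPM (m+2) a b 1).charpoly) B z
      (fun k => (k+1)/2) hHpProd
      (fun i j hij hj => hαpMono (i+1) (j+1) (by omega) (by omega) (by omega))
      hzmono hq3step hq3zero hq3le hq3K hsignB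
  -- positional facts
  have hAμ : ∀ j, j ≤ m+1 → A j < μ j := by
    intro j hj
    have h := (hloc2 (2*j) (by omega)).1 j (by omega)
    rwa [hzeven j] at h
  have hAt : ∀ j, j ≤ m → t j < A (j+1) := by
    intro j hj
    have h := (hloc2 (2*j+1) (by omega)).2 (j+1) (by omega) (by omega)
    rwa [hzodd j] at h
  have hBμ : ∀ j, j ≤ m+1 → μ j < B j := by
    intro j hj
    have h := (hloc3 (2*j) (by omega)).2 j (by omega) (by omega)
    rwa [hzeven j] at h
  have hBt : ∀ j, j ≤ m → B j < t j := by
    intro j hj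
    have h := (hloc3 (2*j+1) (by omega)).1 j (by omega)
    rwa [hzodd j] at h
  -- rewrite helpers
  have hArw : ∀ j, 1 ≤ j → αm j = A (j-1) := by
    intro j hj; rw [hA]; simp only; congr 1; omega
  have hBrw : ∀ j, 1 ≤ j → αp j = B (j-1) := by
    intro j hj; rw [hB]; simp only; congr 1; omega
  have htrw : ∀ j, 1 ≤ j → τ j = t (j-1) := by
    intro j hj; rw [ht]; simp only; congr 1; omega
  refine ⟨?_, ?_, ?_, ?_, ?_, ?_⟩
  · intro j hj1 hj2
    rw [hArw j hj1, hBrw j hj1]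
    exact lt_trans (hAμ (j-1) (by omega)) (hBμ (j-1) (by omega))
  · intro j hj1 hj2
    rw [hBrw j hj1, hArw (j+1) (by omega)]
    have h1 : B (j-1) < t (j-1) := hBt (j-1) (by omega)
    have h2 : t (j-1) < A (j-1+1) := hAt (j-1) (by omega)
    have h3 : j - 1 + 1 = j+1-1 := by omega
    rw [h3] at h2
    exact lt_trans h1 h2
  · have h := hAμ 0 (by omega)
    rw [hArw 1 le_rfl]
    exact h
  · intro j hj1 hj2
    constructor
    · rw [htrw j hj1, hArw (j+1) (by omega)]
      have h2 : t (j-1) < A (j-1+1) := hAt (j-1) (by omega)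
      have h3 : j - 1 + 1 = j+1-1 := by omega
      rw [h3] at h2
      exact h2
    · rw [hArw (j+1) (by omega)]
      have h2 : A (j+1-1) < μ (j+1-1) := hAμ (j+1-1) (by omega)
      have h3 : j + 1 - 1 = j := by omega
      rw [h3] at h2
      exact h2
  · rw [hBrw (m+2) (by omega)]
    have h := hBμ (m+1) le_rfl
    have h3 : m + 2 - 1 = m+1 := by omega
    rw [h3]
    exact h
  · intro j hj1 hj2
    constructor
    · rw [hBrw j hj1]
      exact hBμ (j-1) (by omega)
    · rw [hBrw j hj1, htrw j hj1]
      exact hBt (j-1) (by omega)
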